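/- Let H be a Hopf algebra over a commutative integral domain R, Π a finite group of weights, and h skew-primitive with Δ(h) = g ⊗ h + h ⊗ g'. Suppose λ(g)·λ(g') = 1 for all λ ∈ Π. Then for every λ ∈ Π, λ⁻¹(h) = -λ(h); consequently 2·Σ_Π(h) = 0 and Σ_Π(h) = Σ_{γ∈Π, γ≠ε, γ²=ε} γ(h). -/
import Mathlib


open TensorProduct

/-- Convolution of two `R`-linear functionals on a bialgebra. -/
noncomputable def conv {R H : Type*} [CommSemiring R] [Semiring H] [Bialgebra R H]
    (f g : H →ₗ[R] R) : H →ₗ[R] R :=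
  LinearMap.mul' R R ∘ₗ TensorProduct.map f g ∘ₗ Coalgebra.comul

section ConvLemmas

variable {R H : Type*} [CommSemiring R] [Semiring H] [Bialgebra R H]

lemma conv_apply' (f k : H →ₗ[R] R) (x : H) :
    conv f k x = LinearMap.mul' R R (TensorProduct.map f k (Coalgebra.comul x)) := rfl

lemma conv_counit_left (f : H →ₗ[R] R) : conv (Coalgebra.counit) f = f := by
  ext x
  have h1 : TensorProduct.map (Coalgebra.counit (R := R) (A := H)) f
      = LinearMap.lTensor R f ∘ₗ LinearMap.rTensor H Coalgebra.counit := by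
    simp [LinearMap.lTensor, LinearMap.rTensor, ← TensorProduct.map_comp]
  rw [conv_apply', h1, LinearMap.comp_apply, Coalgebra.rTensor_counit_comul]
  simp

lemma conv_counit_right (f : H →ₗ[R] R) : conv f (Coalgebra.counit) = f := by
  ext x
  have h1 : TensorProduct.map f (Coalgebra.counit (R := R) (A := H))
      = LinearMap.rTensor R f ∘ₗ LinearMap.lTensor H Coalgebra.counit := by
    simp [LinearMap.lTensor, LinearMap.rTensor, ← TensorProduct.map_comp]
  rw [conv_apply', h1, LinearMap.comp_apply, Coalgebra.lTensor_counit_comul]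
  simp

lemma mul'_assoc_aux (z : R ⊗[R] (R ⊗[R] R)) :
    LinearMap.mul' R R (TensorProduct.map (LinearMap.mul' R R) LinearMap.id
      ((TensorProduct.assoc R R R R).symm z))
    = LinearMap.mul' R R (TensorProduct.map LinearMap.id (LinearMap.mul' R R) z) := by
  induction z using TensorProduct.induction_on with
  | zero => simp
  | tmul x w =>
    induction w using TensorProduct.induction_on with
    | zero => simp
    | tmul y z => simp [mul_assoc]
    | add a b ha hb => simp only [tmul_add, map_add, ha, hb]
  | add a b ha hb => simp only [map_add, ha, hb]

lemma conv_assoc (f k l : H →ₗ[R] R) : conv (conv f k) l = conv f (conv k l) := by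
  ext x
  have e1 : TensorProduct.map (conv f k) l
      = TensorProduct.map (LinearMap.mul' R R) LinearMap.id
        ∘ₗ (TensorProduct.map (TensorProduct.map f k) l
          ∘ₗ TensorProduct.map (Coalgebra.comul) LinearMap.id) := by
    rw [← TensorProduct.map_comp, ← TensorProduct.map_comp, LinearMap.comp_id,
      LinearMap.id_comp]
    rfl
  have e2 : TensorProduct.map f (conv k l)
      = TensorProduct.map LinearMap.id (LinearMap.mul' R R)
        ∘ₗ (TensorProduct.map f (TensorProduct.map k l)
          ∘ₗ TensorProduct.map LinearMap.id (Coalgebra.comul)) := by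
    rw [← TensorProduct.map_comp, ← TensorProduct.map_comp, LinearMap.comp_id,
      LinearMap.id_comp]
    rfl
  have e3 : TensorProduct.map (Coalgebra.comul (R := R) (A := H)) LinearMap.id (Coalgebra.comul x)
      = (TensorProduct.assoc R H H H).symm
          (TensorProduct.map LinearMap.id Coalgebra.comul (Coalgebra.comul x)) :=
    (Coalgebra.coassoc_symm_apply x).symm
  rw [conv_apply', conv_apply', e1, e2]
  simp only [LinearMap.comp_apply]
  rw [e3, TensorProduct.map_map_assoc_symm, mul'_assoc_aux]

end ConvLemmas

open Classical in
/-- For a finite group `Φ` of weights and skew-primitive `h` with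
`Δ h = g ⊗ h + h ⊗ g'`, if `lam g * lam g' = 1` for every `lam ∈ Φ`, then every `lam ∈ Φ`
satisfies `lam⁻¹(h) = lam (S h) = - lam h`; consequently `2 Σ_Φ(h) = 0` and `Σ_Φ(h)` equals
the sum of `γ h` over the elements `γ ∈ Φ` of order exactly two. -/
theorem sumPi_skewPrimitive_char_two_case
    {R H : Type*} [CommRing R] [IsDomain R] [Ring H] [HopfAlgebra R H]
    (Φ : Finset (H →ₐ[R] R))
    (hone : Bialgebra.counitAlgHom R H ∈ Φ)
    (hmul : ∀ γ ∈ Φ, ∀ ν ∈ Φ, ∃ μ ∈ Φ,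
      conv γ.toLinearMap ν.toLinearMap = μ.toLinearMap)
    (hinv : ∀ γ ∈ Φ, ∃ ν ∈ Φ,
      conv γ.toLinearMap ν.toLinearMap = (Bialgebra.counitAlgHom R H).toLinearMap)
    (g g' h : H)
    (hg : Coalgebra.comul (R := R) g = g ⊗ₜ[R] g) (hgε : Coalgebra.counit (R := R) g = 1)
    (hg' : Coalgebra.comul (R := R) g' = g' ⊗ₜ[R] g') (hg'ε : Coalgebra.counit (R := R) g' = 1)
    (hh : Coalgebra.comul (R := R) h = g ⊗ₜ[R] h + h ⊗ₜ[R] g')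
    (hgg' : ∀ lam ∈ Φ, lam g * lam g' = 1) :
    (∀ lam ∈ Φ, lam (HopfAlgebra.antipode (R := R) h) = - lam h) ∧
    2 * (∑ γ ∈ Φ, γ h) = 0 ∧
    (∑ γ ∈ Φ, γ h) =
      ∑ γ ∈ Φ.filter (fun γ => γ ≠ Bialgebra.counitAlgHom R H ∧
        conv γ.toLinearMap γ.toLinearMap = (Bialgebra.counitAlgHom R H).toLinearMap), γ h := by
  classical
  have F0 : (Bialgebra.counitAlgHom R H).toLinearMap = (Coalgebra.counit : H →ₗ[R] R) := rfl
  -- counit of h is zero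
  have hεh : Coalgebra.counit (R := R) h = 0 := by
    have e := Coalgebra.lTensor_counit_comul (R := R) h
    rw [hh] at e
    simp only [map_add, LinearMap.lTensor_tmul, hg'ε] at e
    have e2 : g ⊗ₜ[R] (Coalgebra.counit (R := R) h) = 0 := by
      have := add_right_cancel (b := h ⊗ₜ[R] (1 : R)) (by simpa using e)
      simpa using this
    have e3 := congrArg (fun t => LinearMap.mul' R R
      (TensorProduct.map (Coalgebra.counit (R := R)) (LinearMap.id) t)) e2
    simpa [hgε] using e3
  -- values of convolutions
  have convh : ∀ f k : H →ₗ[R] R, conv f k h = f g * k h + f h * k g' := by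
    intro f k
    rw [conv_apply', hh]
    simp
  have convgg : ∀ f k : H →ₗ[R] R, conv f k g = f g * k g := by
    intro f k; rw [conv_apply', hg]; simp
  have convg' : ∀ f k : H →ₗ[R] R, conv f k g' = f g' * k g' := by
    intro f k; rw [conv_apply', hg']; simp
  -- antipode identities
  have hS : HopfAlgebra.antipode (R := R) g * h + HopfAlgebra.antipode (R := R) h * g' = 0 := by
    have e := HopfAlgebra.mul_antipode_rTensor_comul_apply (R := R) (a := h)
    rw [hh, hεh] at e
    simpa using e
  have hSg : HopfAlgebra.antipode (R := R) g * g = 1 := by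
    have e := HopfAlgebra.mul_antipode_rTensor_comul_apply (R := R) (a := g)
    rw [hg, hgε] at e
    simpa using e
  have part1 : ∀ lam ∈ Φ, lam (HopfAlgebra.antipode (R := R) h) = - lam h := by
    intro lam hlam
    have h1 : lam (HopfAlgebra.antipode (R := R) g) * lam h
        + lam (HopfAlgebra.antipode (R := R) h) * lam g' = 0 := by
      have := congrArg lam hS
      simpa [map_add, map_mul] using this
    have h2 : lam (HopfAlgebra.antipode (R := R) g) * lam g = 1 := by
      have := congrArg lam hSg
      simpa [map_mul] using this
    have h3 := hgg' lam hlam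
    linear_combination (lam g) * h1 - (lam h) * h2
      - (lam (HopfAlgebra.antipode (R := R) h)) * h3
  -- the inverse map
  choose! J hJmem hJconv using hinv
  have algext : ∀ a b : H →ₐ[R] R, a.toLinearMap = b.toLinearMap → a = b := by
    intro a b e
    ext x
    exact LinearMap.congr_fun e x
  have cl : ∀ a : H →ₗ[R] R,
      conv (Bialgebra.counitAlgHom R H).toLinearMap a = a := by
    intro a; rw [F0]; exact conv_counit_left a
  have cr : ∀ a : H →ₗ[R] R,
      conv a (Bialgebra.counitAlgHom R H).toLinearMap = a := by
    intro a; rw [F0]; exact conv_counit_right a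
  have Jinvol : ∀ γ ∈ Φ, J (J γ) = γ := by
    intro γ hγ
    apply algext
    calc (J (J γ)).toLinearMap
        = conv (conv γ.toLinearMap (J γ).toLinearMap) (J (J γ)).toLinearMap := by
          rw [hJconv γ hγ, cl]
      _ = conv γ.toLinearMap (conv (J γ).toLinearMap (J (J γ)).toLinearMap) := conv_assoc _ _ _
      _ = γ.toLinearMap := by rw [hJconv (J γ) (hJmem γ hγ), cr]
  have Jleft : ∀ γ ∈ Φ, conv (J γ).toLinearMap γ.toLinearMap
      = (Bialgebra.counitAlgHom R H).toLinearMap := by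
    intro γ hγ
    have := hJconv (J γ) (hJmem γ hγ)
    rwa [Jinvol γ hγ] at this
  have runiq : ∀ γ ∈ Φ, ∀ a : H →ₗ[R] R,
      conv γ.toLinearMap a = (Bialgebra.counitAlgHom R H).toLinearMap →
        a = (J γ).toLinearMap := by
    intro γ hγ a ha
    calc a = conv (conv (J γ).toLinearMap γ.toLinearMap) a := by rw [Jleft γ hγ, cl]
      _ = conv (J γ).toLinearMap (conv γ.toLinearMap a) := conv_assoc _ _ _
      _ = (J γ).toLinearMap := by rw [ha, cr]
  have Jone : J (Bialgebra.counitAlgHom R H) = Bialgebra.counitAlgHom R H := by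
    apply algext _ _ (runiq _ hone _ (cl _)).symm
  -- value of inverses on h
  have Jh : ∀ γ ∈ Φ, (J γ) h = - γ h := by
    intro γ hγ
    have e1 : γ g * (J γ) h + γ h * (J γ) g' = 0 := by
      have := LinearMap.congr_fun (hJconv γ hγ) h
      rw [convh] at this
      simpa [hεh] using this
    have e2 : γ g' * (J γ) g' = 1 := by
      have := LinearMap.congr_fun (hJconv γ hγ) g'
      rw [convg'] at this
      simpa [hg'ε] using this
    have e3 := hgg' γ hγ
    linear_combination (γ g') * e1 - ((J γ) h) * e3 - (γ h) * e2
  -- part 2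
  have sum_eq : (∑ γ ∈ Φ, γ h) = ∑ γ ∈ Φ, -(γ h) := by
    refine Finset.sum_bij' (fun γ _ => J γ) (fun γ _ => J γ)
      (fun γ hγ => hJmem γ hγ) (fun γ hγ => hJmem γ hγ)
      (fun γ hγ => Jinvol γ hγ) (fun γ hγ => Jinvol γ hγ) ?_
    intro γ hγ
    rw [Jh γ hγ, neg_neg]
  have part2 : 2 * (∑ γ ∈ Φ, γ h) = 0 := by
    rw [Finset.sum_neg_distrib] at sum_eq
    linear_combination sum_eq
  refine ⟨part1, part2, ?_⟩
  -- part 3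
  set p : (H →ₐ[R] R) → Prop := fun γ => γ ≠ Bialgebra.counitAlgHom R H ∧
      conv γ.toLinearMap γ.toLinearMap = (Bialgebra.counitAlgHom R H).toLinearMap with hp
  have hsplit := Finset.sum_filter_add_sum_filter_not Φ p (fun γ => γ h)
  have hzero : ∑ γ ∈ Φ.filter (fun γ => ¬ p γ), γ h = 0 := by
    refine Finset.sum_involution (fun γ _ => J γ) ?_ ?_ ?_ ?_
    · intro γ hγ
      rw [Jh γ (Finset.mem_filter.mp hγ).1]
      ring
    · intro γ hγ hne heq
      replace heq : J γ = γ := heq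
      have hγΦ := (Finset.mem_filter.mp hγ).1
      have hnp := (Finset.mem_filter.mp hγ).2
      have : conv γ.toLinearMap γ.toLinearMap = (Bialgebra.counitAlgHom R H).toLinearMap := by
        have := hJconv γ hγΦ
        rwa [heq] at this
      have hγε : γ = Bialgebra.counitAlgHom R H := by
        by_contra hne'
        exact hnp ⟨hne', this⟩
      apply hne
      rw [hγε]
      simpa using hεh
    · intro γ hγ
      have hγΦ := (Finset.mem_filter.mp hγ).1
      refine Finset.mem_filter.mpr ⟨hJmem γ hγΦ, ?_⟩
      intro hpJ'
      replace hpJ : p (J γ) := hpJ'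
      have hJJ : (J γ) = γ := by
        have u1 := runiq (J γ) (hJmem γ hγΦ) _ hpJ.2
        have u2 := runiq (J γ) (hJmem γ hγΦ) _ (Jleft γ hγΦ)
        exact algext _ _ (u1.trans u2.symm)
      have hne' : γ = Bialgebra.counitAlgHom R H := by
        by_contra hc
        have : conv γ.toLinearMap γ.toLinearMap
            = (Bialgebra.counitAlgHom R H).toLinearMap := by
          have := hJconv γ hγΦ
          rwa [hJJ] at this
        exact (Finset.mem_filter.mp hγ).2 ⟨hc, this⟩
      apply hpJ.1
      rw [hne', Jone]
    · intro γ hγ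
      exact Jinvol γ (Finset.mem_filter.mp hγ).1
  rw [← hsplit, hzero, add_zero]
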